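/- arXiv:1502.01389 — 4 statements merged into one kernel-verified Lean document; each statement's English description precedes it below -/
import Mathlib

section
/- Let K be a field of characteristic zero with a derivation ∂ : K → K, let t ∈ K satisfy ∂t = 1, and let α ∈ K be a constant (∂α = 0). If z ∈ K is a solution of the second Painlevé equation P_II(α), i.e. ∂(∂z) = 2z³ + t·z + α, and if ∂z + z² + t/2 ≠ 0, then w = -z - (α + 1/2)/(∂z + z² + t/2) is a solution of P_II(α + 1), i.e. ∂(∂w) = 2w³ + t·w + (α + 1). -/
/-!
For a solution `z` of `P_II(α)` the Riccati expression `u = ∂z + z² + t/2` satisfies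
`∂u = 2zu + (α + 1/2)`. The transform `w = T₊(z)` is exactly the element with
`(w + z) u = -(α + 1/2)`; differentiating this relation gives `∂(w + z) = w² - z²`, that is
`u = -∂w + w² + t/2`. Differentiating once more and substituting `∂u` shows that `w` solves
`P_II(α + 1)`.
-/

namespace Derivation

section Field

variable {K : Type*} [Field K] [CharZero K] (D : Derivation ℚ K K)

theorem map_div_two (x : K) : D (x / 2) = D x / 2 := by
  rw [leibniz_div_const _ _ _ (by exact_mod_cast D.map_natCast 2), smul_eq_mul, inv_mul_eq_div]

theorem map_sq_add_div_two {t : K} (ht : D t = 1) (y : K) :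
    D (y ^ 2 + t / 2) = 2 * y * D y + 1 / 2 := by
  rw [map_add, leibniz_pow, map_div_two, ht, nsmul_eq_mul, smul_eq_mul]
  push_cast
  ring

theorem map_riccati_eq_of_painleveII {t α z : K} (ht : D t = 1)
    (hz : D (D z) = 2 * z ^ 3 + t * z + α) :
    D (D z + z ^ 2 + t / 2) = 2 * z * (D z + z ^ 2 + t / 2) + (α + 1 / 2) := by
  rw [add_assoc, map_add, D.map_sq_add_div_two ht, hz]
  ring

end Field

theorem map_eq_mul_sub_of_mul_eq_neg {A R : Type*} [CommSemiring A] [CommRing R] [IsDomain R]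
    [Algebra A R] (D : Derivation A R R) {s u z a : R} (ha : D a = 0) (hu : u ≠ 0)
    (hDu : D u = 2 * z * u + a) (hsu : s * u = -a) : D s = s * (s - 2 * z) := by
  have hD : s * D u + u * D s = 0 := by
    simpa [ha, smul_eq_mul] using congrArg D hsu
  refine mul_left_cancel₀ hu ?_
  linear_combination hD - s * hDu - s * hsu

end Derivation

open Derivation

/-- The Bäcklund transformation `T₊` sends solutions of `P_II(α)`
to solutions of `P_II(α + 1)`. -/
theorem PII_backlund_Tplus {K : Type*} [Field K] [CharZero K]
    (D : Derivation ℚ K K) (t α z : K)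
    (ht : D t = 1) (hα : D α = 0)
    (hz : D (D z) = 2 * z ^ 3 + t * z + α)
    (hden : D z + z ^ 2 + t / 2 ≠ 0) :
    D (D (-z - (α + 1 / 2) / (D z + z ^ 2 + t / 2))) =
      2 * (-z - (α + 1 / 2) / (D z + z ^ 2 + t / 2)) ^ 3 +
        t * (-z - (α + 1 / 2) / (D z + z ^ 2 + t / 2)) + (α + 1) := by
  set u := D z + z ^ 2 + t / 2 with hu
  set w := -z - (α + 1 / 2) / u
  have hDa : D (α + 1 / 2) = 0 := by
    rw [map_add, hα, map_div_two, D.map_one_eq_zero, zero_div, add_zero]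
  have hDu : D u = 2 * z * u + (α + 1 / 2) := D.map_riccati_eq_of_painleveII ht hz
  have hwz : (w + z) * u = -(α + 1 / 2) := by
    simp only [w]
    field_simp
    ring
  have hDwz : D (w + z) = (w + z) * (w + z - 2 * z) :=
    D.map_eq_mul_sub_of_mul_eq_neg hDa hden hDu hwz
  have hDw : D w = w ^ 2 + t / 2 - u := by
    rw [map_add] at hDwz
    linear_combination hDwz - hu
  rw [hDw, map_sub, D.map_sq_add_div_two ht, hDu, hDw]
  linear_combination (-2) * hwz
end

section
/- Let K be a field of characteristic zero with a derivation ∂ : K → K, let t ∈ K satisfy ∂t = 1, and let α ∈ K be a constant (∂α = 0). If z ∈ K is a solution of the second Painlevé equation P_II(α), i.e. ∂(∂z) = 2z³ + t·z + α, and if ∂z - z² - t/2 ≠ 0, then w = -z + (α - 1/2)/(∂z - z² - t/2) is a solution of P_II(α - 1), i.e. ∂(∂w) = 2w³ + t·w + (α - 1). -/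
/-!
With `u = z' - z² - t/2` and `c = α - 1/2`, the equation `P_II(α)` for `z` is equivalent to the
first-order system `z' = z² + t/2 + u`, `u' = -2zu + c`. The substitution `z ↦ z - c/u` maps this
system with constant `c` to the same system with constant `-c`, so `z - c/u` solves `P_II(1 - α)`;
since `P_II` is odd under `y ↦ -y`, `α ↦ -α`, the transform `-z + c/u` solves `P_II(α - 1)`.
-/

namespace PainleveII

variable {K : Type*} [Field K] [CharZero K] (D : Derivation ℚ K K)

def Solves (t α y : K) : Prop :=
  D (D y) = 2 * y ^ 3 + t * y + α

structure IsHamiltonianPair (t c z u : K) : Prop where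
  deriv_fst : D z = z ^ 2 + t / 2 + u
  deriv_snd : D u = -2 * z * u + c

variable {D}

theorem deriv_div_two (x : K) : D (x / 2) = D x / 2 := by
  rw [D.leibniz_div_const x 2 (by exact_mod_cast D.map_natCast 2), smul_eq_mul, inv_mul_eq_div]

theorem Solves.neg {t α y : K} (hy : Solves D t α y) : Solves D t (-α) (-y) := by
  unfold Solves at *
  rw [map_neg, map_neg, hy]
  ring

theorem isHamiltonianPair_of_solves {t α z : K} (ht : D t = 1) (hz : Solves D t α z) :
    IsHamiltonianPair D t (α - 1 / 2) z (D z - z ^ 2 - t / 2) where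
  deriv_fst := by ring
  deriv_snd := by
    rw [map_sub, map_sub, hz, D.leibniz_pow, deriv_div_two, ht, smul_eq_mul]
    ring

theorem IsHamiltonianPair.solves {t c z u : K} (ht : D t = 1) (h : IsHamiltonianPair D t c z u) :
    Solves D t (c + 1 / 2) z := by
  unfold Solves
  rw [h.deriv_fst, map_add, map_add, D.leibniz_pow, deriv_div_two, ht, h.deriv_fst,
    h.deriv_snd, smul_eq_mul]
  ring

theorem IsHamiltonianPair.backlund {t c z u : K} (hc : D c = 0) (hu : u ≠ 0)
    (h : IsHamiltonianPair D t c z u) : IsHamiltonianPair D t (-c) (z - c / u) u where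
  deriv_fst := by
    rw [map_sub, D.leibniz_div, hc, h.deriv_fst, h.deriv_snd, smul_eq_mul, smul_eq_mul,
      smul_eq_mul]
    field_simp
    ring
  deriv_snd := by
    rw [h.deriv_snd]
    field_simp
    ring

end PainleveII

open PainleveII in
/-- The Bäcklund transformation `T₋` sends solutions of `P_II(α)`
to solutions of `P_II(α - 1)`. -/
theorem PII_backlund_Tminus {K : Type*} [Field K] [CharZero K]
    (D : Derivation ℚ K K) (t α z : K)
    (ht : D t = 1) (hα : D α = 0)
    (hz : D (D z) = 2 * z ^ 3 + t * z + α)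
    (hden : D z - z ^ 2 - t / 2 ≠ 0) :
    D (D (-z + (α - 1 / 2) / (D z - z ^ 2 - t / 2))) =
      2 * (-z + (α - 1 / 2) / (D z - z ^ 2 - t / 2)) ^ 3 +
        t * (-z + (α - 1 / 2) / (D z - z ^ 2 - t / 2)) + (α - 1) := by
  have hc : D (α - 1 / 2) = 0 := by
    rw [map_sub, hα, deriv_div_two, D.map_one_eq_zero, zero_div, sub_zero]
  have hw := (((isHamiltonianPair_of_solves ht hz).backlund hc hden).solves ht).neg
  rwa [show -(-(α - 1 / 2) + 1 / 2) = α - 1 by ring, neg_sub', sub_neg_eq_add] at hw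
end

section
/- Let K be a field of characteristic zero with a derivation ∂ : K → K, let t ∈ K satisfy ∂t = 1, and let α ∈ K be a constant (∂α = 0). If z ∈ K is a solution of the second Painlevé equation P_II(α), i.e. ∂(∂z) = 2z³ + t·z + α, and if ∂z + z² + t/2 = 0, then α = -1/2. Consequently, for α ≠ -1/2 the denominator appearing in the Bäcklund transformation T₊(z) = -z - (α + 1/2)/(∂z + z² + t/2) never vanishes on solutions of P_II(α). -/
/-- For a solution `z` of `P_II(α)`, if the denominator
`∂z + z² + t/2` of `T₊` vanishes then `α = -1/2`; consequently for
`α ≠ -1/2` that denominator never vanishes on solutions of `P_II(α)`. -/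
theorem PII_Tplus_denominator {K : Type*} [Field K] [CharZero K]
    (D : Derivation ℚ K K) (t α z : K)
    (ht : D t = 1) (hα : D α = 0)
    (hz : D (D z) = 2 * z ^ 3 + t * z + α) :
    (D z + z ^ 2 + t / 2 = 0 → α = -(1 / 2)) ∧
      (α ≠ -(1 / 2) → D z + z ^ 2 + t / 2 ≠ 0) := by
  have key : D z + z ^ 2 + t / 2 = 0 → α = -(1 / 2) := by
    intro h
    have hDz : D z = -(z ^ 2) - t / 2 := by linear_combination h
    have h2 : D (D z + z ^ 2 + t / 2) = 0 := by rw [h]; simp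
    have h3 : D (z ^ 2) = 2 * z * D z := by
      rw [pow_two, Derivation.leibniz, smul_eq_mul]; ring
    have h4 : D (t / 2) = 1 / 2 := by
      have hh : D (t / 2) + D (t / 2) = D t := by
        rw [← map_add]; norm_num
      rw [ht] at hh
      linear_combination hh / 2
    rw [map_add, map_add, h3, h4, hz, hDz] at h2
    linear_combination h2
  exact ⟨key, fun hne h => hne (key h)⟩
end

section
/- Let K be a field of characteristic zero with a derivation ∂ : K → K, let t ∈ K satisfy ∂t = 1, and let α ∈ K be a constant (∂α = 0) with α ≠ -1/2. Let z ∈ K be a solution of the second Painlevé equation P_II(α), i.e. ∂(∂z) = 2z³ + t·z + α (so that ∂z + z² + t/2 ≠ 0), and set w = T₊(z) = -z - (α + 1/2)/(∂z + z² + t/2). Then ∂w - w² - t/2 ≠ 0 and T₋ applied to w with parameter α + 1, namely -w + ((α + 1) - 1/2)/(∂w - w² - t/2), equals z. In particular the Bäcklund transformation T₊ defines a bijection from the set of solutions of P_II(α) in K onto the set of solutions of P_II(α + 1) in K, with inverse T₋. -/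
/-!
For a solution `u` of `P_II(α)`, the denominator `s = ∂u + u² + t/2` of `T₊` satisfies the
linear equation `∂s = 2us + (α + 1/2)`, so `s ≠ 0` when `α ≠ -1/2`. A direct computation then
gives `∂w - w² - t/2 = -s` for `w = T₊(u)`, from which `w` solves `P_II(α + 1)` and `T₋(w) = u`.
The symmetry `(u, α) ↦ (-u, -α)` of `P_II` exchanges `T₊` and `T₋`, so the same two facts hold
with the roles of `T₊` and `T₋` swapped.
-/

section
variable {R K : Type*} [CommRing R] [Field K] [Algebra R K] (D : Derivation R K K)

theorem Derivation.map_div_two_s5 (a : K) : D (a / 2) = D a / 2 := by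
  rw [D.leibniz_div_const _ _ (by simpa using D.map_natCast 2), smul_eq_mul, div_eq_inv_mul]

theorem Derivation.map_sq (a : K) : D (a ^ 2) = 2 * a * D a := by
  rw [D.leibniz_pow]; simp only [Nat.cast_ofNat, nsmul_eq_mul, smul_eq_mul]; ring

end

namespace PainleveII

variable {R K : Type*} [CommRing R] [Field K] [Algebra R K]
  (D : Derivation R K K) (t : K)

def IsSolution (α u : K) : Prop := D (D u) = 2 * u ^ 3 + t * u + α

def backlundPlus (α u : K) : K := -u - (α + 1 / 2) / (D u + u ^ 2 + t / 2)

def backlundMinus (α u : K) : K := -u + (α - 1 / 2) / (D u - u ^ 2 - t / 2)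

variable {D t} {α β u v : K}

theorem IsSolution.neg (hu : IsSolution D t α u) : IsSolution D t (-α) (-u) := by
  unfold IsSolution at *; rw [D.map_neg, D.map_neg, hu]; ring

variable (D t) in
theorem backlundPlus_neg_neg (α u : K) :
    backlundPlus D t (-α) (-u) = -backlundMinus D t α u := by
  unfold backlundPlus backlundMinus
  rw [D.map_neg, ← neg_div_neg_eq]; ring

variable (D t) in
theorem backlundMinus_neg_neg (α u : K) :
    backlundMinus D t (-α) (-u) = -backlundPlus D t α u := by
  unfold backlundPlus backlundMinus
  rw [D.map_neg, ← neg_div_neg_eq]; ring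

variable [CharZero K]

theorem deriv_denomPlus (ht : D t = 1) (hu : IsSolution D t α u) :
    D (D u + u ^ 2 + t / 2) = 2 * u * (D u + u ^ 2 + t / 2) + (α + 1 / 2) := by
  rw [D.map_add, D.map_add, hu, D.map_sq, D.map_div_two_s5, ht]; ring

theorem denomPlus_ne_zero (ht : D t = 1) (hα₀ : α + 1 / 2 ≠ 0) (hu : IsSolution D t α u) :
    D u + u ^ 2 + t / 2 ≠ 0 := by
  intro hs
  have hDs := deriv_denomPlus ht hu
  rw [hs, D.map_zero, mul_zero, zero_add] at hDs
  exact hα₀ hDs.symm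

theorem denomMinus_backlundPlus (ht : D t = 1) (hα : D α = 0) (hα₀ : α + 1 / 2 ≠ 0)
    (hu : IsSolution D t α u) :
    D (backlundPlus D t α u) - backlundPlus D t α u ^ 2 - t / 2 = -(D u + u ^ 2 + t / 2) := by
  have hs := denomPlus_ne_zero ht hα₀ hu
  have hDs := deriv_denomPlus ht hu
  have hDα₀ : D (α + 1 / 2) = 0 := by
    rw [D.map_add, hα, D.map_div_two_s5, D.map_one_eq_zero, zero_div, zero_add]
  unfold backlundPlus
  rw [D.map_sub, D.map_neg, D.leibniz_div, hDα₀, hDs]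
  simp only [smul_eq_mul]
  set s := D u + u ^ 2 + t / 2 with hs_def
  have hDu : D u = s - u ^ 2 - t / 2 := by rw [hs_def]; ring
  clear_value s
  rw [hDu]
  field_simp
  ring

theorem isSolution_backlundPlus (ht : D t = 1) (hα : D α = 0) (hα₀ : α + 1 / 2 ≠ 0)
    (hu : IsSolution D t α u) : IsSolution D t (α + 1) (backlundPlus D t α u) := by
  have hs := denomPlus_ne_zero ht hα₀ hu
  have hDs := deriv_denomPlus ht hu
  have hDw := denomMinus_backlundPlus ht hα hα₀ hu
  have hws : (backlundPlus D t α u + u) * (D u + u ^ 2 + t / 2) = -(α + 1 / 2) := by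
    rw [backlundPlus, add_mul, sub_mul, div_mul_cancel₀ _ hs]
    ring
  set s := D u + u ^ 2 + t / 2
  set w := backlundPlus D t α u
  have hDw' : D w = w ^ 2 + t / 2 - s := by linear_combination hDw
  unfold IsSolution
  rw [hDw', D.map_sub, D.map_add, D.map_sq, D.map_div_two_s5, ht, hDw', hDs]
  linear_combination (-2 : K) * hws

theorem backlundMinus_backlundPlus (ht : D t = 1) (hα : D α = 0) (hα₀ : α + 1 / 2 ≠ 0)
    (hu : IsSolution D t α u) : backlundMinus D t (α + 1) (backlundPlus D t α u) = u := by
  rw [backlundMinus, denomMinus_backlundPlus ht hα hα₀ hu, backlundPlus, div_neg]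
  ring

theorem isSolution_backlundMinus (ht : D t = 1) (hβ : D β = 0) (hβ₀ : β - 1 / 2 ≠ 0)
    (hv : IsSolution D t β v) : IsSolution D t (β - 1) (backlundMinus D t β v) := by
  have h := isSolution_backlundPlus ht (by rw [D.map_neg, hβ, neg_zero])
    (fun h => hβ₀ (by linear_combination -h)) hv.neg |>.neg
  rwa [backlundPlus_neg_neg, neg_neg, show -(-β + 1) = β - 1 by ring] at h

theorem backlundPlus_backlundMinus (ht : D t = 1) (hβ : D β = 0) (hβ₀ : β - 1 / 2 ≠ 0)
    (hv : IsSolution D t β v) : backlundPlus D t (β - 1) (backlundMinus D t β v) = v := by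
  have h := backlundMinus_backlundPlus ht (by rw [D.map_neg, hβ, neg_zero])
    (fun h => hβ₀ (by linear_combination -h)) hv.neg
  rw [backlundPlus_neg_neg, show -β + 1 = -(β - 1) by ring, backlundMinus_neg_neg, neg_inj] at h
  exact h

theorem bijOn_backlundPlus (ht : D t = 1) (hα : D α = 0) (hα₀ : α + 1 / 2 ≠ 0) :
    Set.BijOn (backlundPlus D t α) {u | IsSolution D t α u} {v | IsSolution D t (α + 1) v} := by
  have hα1 : D (α + 1) = 0 := by rw [D.map_add, hα, D.map_one_eq_zero, add_zero]
  have hα1₀ : α + 1 - 1 / 2 ≠ 0 := fun h => hα₀ (by linear_combination h)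
  refine Set.InvOn.bijOn (f' := backlundMinus D t (α + 1)) ⟨fun u hu => ?_, fun v hv => ?_⟩
    (fun u hu => isSolution_backlundPlus ht hα hα₀ hu) (fun v hv => ?_)
  · exact backlundMinus_backlundPlus ht hα hα₀ hu
  · simpa using backlundPlus_backlundMinus ht hα1 hα1₀ hv
  · simpa using isSolution_backlundMinus ht hα1 hα1₀ hv

end PainleveII

/-- For `α ≠ -1/2` and `z` a solution of `P_II(α)`, the denominator
of `T₊` does not vanish at `z`; setting `w = T₊(z)`, the denominator of `T₋`
(with parameter `α + 1`) does not vanish at `w` and `T₋(w) = z`.  In particular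
`T₊` is a bijection from the solution set of `P_II(α)` in `K` onto the solution
set of `P_II(α + 1)` in `K`, with inverse `T₋`. -/
theorem PII_Tplus_bijection {K : Type*} [Field K] [CharZero K]
    (D : Derivation ℚ K K) (t α z w : K)
    (ht : D t = 1) (hα : D α = 0) (hαne : α ≠ -(1 / 2))
    (hz : D (D z) = 2 * z ^ 3 + t * z + α)
    (hw : w = -z - (α + 1 / 2) / (D z + z ^ 2 + t / 2)) :
    D z + z ^ 2 + t / 2 ≠ 0 ∧
    D w - w ^ 2 - t / 2 ≠ 0 ∧
    -w + ((α + 1) - 1 / 2) / (D w - w ^ 2 - t / 2) = z ∧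
    Set.BijOn (fun u => -u - (α + 1 / 2) / (D u + u ^ 2 + t / 2))
      {u | D (D u) = 2 * u ^ 3 + t * u + α}
      {u | D (D u) = 2 * u ^ 3 + t * u + (α + 1)} := by
  open PainleveII in
  have hα₀ : α + 1 / 2 ≠ 0 := fun h => hαne (eq_neg_of_add_eq_zero_left h)
  have hs := denomPlus_ne_zero ht hα₀ hz
  subst hw
  exact ⟨hs, (denomMinus_backlundPlus ht hα hα₀ hz).trans_ne (neg_ne_zero.mpr hs),
    backlundMinus_backlundPlus ht hα hα₀ hz, bijOn_backlundPlus ht hα hα₀⟩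
end
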